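/- Let F(k) = A + b_{J(k)} K_{J(k)} where J : ℕ → 𝒥 takes values in a finite index set 𝒥, and suppose there exists a positive definite matrix family {P_J}_{J ∈ 𝒥} and ε > 0 such that (A + b_J K_J)ᵀ P_{J'} (A + b_J K_J) − P_J ≼ −ε I for all J, J' ∈ 𝒥. Then the switched system x(k+1) = F(k) x(k) is globally exponentially stable for every switching signal J(·): there exist c > 0 and μ ∈ (0,1) with |x(k)| ≤ c μ^k |x(0)|. -/

import Mathlib

/-!
The switched quadratic form `V k = x kᵀ P (J k) x k` is a common Lyapunov function: the LMI with
`i = J k`, `i' = J (k + 1)` gives `V (k + 1) + ε ‖x k‖² ≤ V k`, and `V k ≤ β ‖x k‖²` for a uniform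
`β > ε` (finitely many `P i`), so `V` contracts by `1 - ε / β` at every step whatever the
switching. Since also `ε ‖x k‖² ≤ V k`, the state decays like `√(1 - ε / β) ^ k`.
-/

open Matrix

section QuadraticForm

variable {d : Type*} [Fintype d]

lemma EuclideanSpace.dotProduct_self_eq_norm_sq (x : EuclideanSpace ℝ d) :
    x ⬝ᵥ x = ‖x‖ ^ 2 := by
  rw [← real_inner_self_eq_norm_sq, EuclideanSpace.inner_eq_star_dotProduct, star_trivial]

lemma Matrix.dotProduct_mulVec_le_opNorm_mul_sq [DecidableEq d] (M : Matrix d d ℝ)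
    (x : EuclideanSpace ℝ d) : x ⬝ᵥ M *ᵥ x ≤ ‖toEuclideanCLM (𝕜 := ℝ) M‖ * ‖x‖ ^ 2 := by
  rw [← inner_toEuclideanCLM]
  calc inner ℝ x (toEuclideanCLM (𝕜 := ℝ) M x) ≤ ‖x‖ * ‖toEuclideanCLM (𝕜 := ℝ) M x‖ :=
        real_inner_le_norm _ _
    _ ≤ ‖x‖ * (‖toEuclideanCLM (𝕜 := ℝ) M‖ * ‖x‖) := by
        gcongr; exact ContinuousLinearMap.le_opNorm _ _
    _ = ‖toEuclideanCLM (𝕜 := ℝ) M‖ * ‖x‖ ^ 2 := by ring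

lemma exists_gt_forall_dotProduct_mulVec_le [DecidableEq d] {ι : Type*} [Fintype ι]
    (P : ι → Matrix d d ℝ) (γ : ℝ) :
    ∃ β > γ, ∀ i, ∀ x : EuclideanSpace ℝ d, x ⬝ᵥ P i *ᵥ x ≤ β * ‖x‖ ^ 2 := by
  set S := ∑ i, ‖toEuclideanCLM (𝕜 := ℝ) (P i)‖
  have hS : 0 ≤ S := Finset.sum_nonneg fun i _ => norm_nonneg _
  refine ⟨max γ 0 + 1 + S, by linarith [le_max_left γ 0], fun i x => ?_⟩
  have hi : ‖toEuclideanCLM (𝕜 := ℝ) (P i)‖ ≤ max γ 0 + 1 + S := by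
    have := Finset.single_le_sum (fun j _ => norm_nonneg (toEuclideanCLM (𝕜 := ℝ) (P j)))
      (Finset.mem_univ i)
    linarith [le_max_right γ 0]
  exact (dotProduct_mulVec_le_opNorm_mul_sq _ x).trans (by gcongr)

lemma Matrix.dotProduct_mulVec_add_le_of_posSemidef [DecidableEq d] {F P P' : Matrix d d ℝ}
    {ε : ℝ} (h : (P - Fᵀ * P' * F - ε • (1 : Matrix d d ℝ)).PosSemidef) (x : d → ℝ) :
    (F *ᵥ x) ⬝ᵥ P' *ᵥ (F *ᵥ x) + ε * (x ⬝ᵥ x) ≤ x ⬝ᵥ P *ᵥ x := by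
  have h0 := h.dotProduct_mulVec_nonneg x
  rw [star_trivial, sub_mulVec, sub_mulVec, dotProduct_sub, dotProduct_sub, ← mulVec_mulVec,
    ← mulVec_mulVec, dotProduct_mulVec x Fᵀ, vecMul_transpose, smul_mulVec, one_mulVec,
    dotProduct_smul, smul_eq_mul] at h0
  linarith

end QuadraticForm

lemma le_pow_mul_of_lyapunov {V q : ℕ → ℝ} {ε β : ℝ} (hε : 0 < ε) (hεβ : ε < β)
    (hV : ∀ k, V k ≤ β * q k) (hstep : ∀ k, V (k + 1) + ε * q k ≤ V k) (k : ℕ) :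
    V k ≤ (1 - ε / β) ^ k * V 0 := by
  have hβ : 0 < β := hε.trans hεβ
  refine le_geom (by rw [sub_nonneg, div_le_one hβ]; exact hεβ.le) k fun j _ => ?_
  have : ε / β * V j ≤ ε * q j :=
    calc ε / β * V j ≤ ε / β * (β * q j) := by gcongr; exact hV j
      _ = ε * q j := by field_simp
  linarith [hstep j]

lemma le_sqrt_div_mul_pow_mul {a b ε β μ : ℝ} {k : ℕ} (ha : 0 ≤ a) (hb : 0 ≤ b) (hμ : 0 ≤ μ)
    (hε : 0 < ε) (hβ : 0 ≤ β) (h : ε * a ^ 2 ≤ (μ ^ 2) ^ k * (β * b ^ 2)) :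
    a ≤ √(β / ε) * μ ^ k * b := by
  rw [← pow_le_pow_iff_left₀ ha (by positivity) two_ne_zero, mul_pow, mul_pow,
    Real.sq_sqrt (by positivity), ← pow_mul, mul_comm k, pow_mul, div_mul_eq_mul_div,
    div_mul_eq_mul_div, le_div_iff₀ hε]
  linarith

theorem stmt12 {n : ℕ} {ι : Type*} [Fintype ι]
    (A : Matrix (Fin n) (Fin n) ℝ) (m : ι → ℕ)
    (b : (i : ι) → Matrix (Fin n) (Fin (m i)) ℝ)
    (K : (i : ι) → Matrix (Fin (m i)) (Fin n) ℝ)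
    (P : ι → Matrix (Fin n) (Fin n) ℝ) (hP : ∀ i, (P i).PosDef)
    (ε : ℝ) (hε : 0 < ε)
    (hLyap : ∀ i i' : ι,
      (P i - (A + b i * K i).transpose * P i' * (A + b i * K i)
        - ε • (1 : Matrix (Fin n) (Fin n) ℝ)).PosSemidef) :
    ∃ c > 0, ∃ μ ∈ Set.Ioo (0 : ℝ) 1,
      ∀ J : ℕ → ι, ∀ x : ℕ → EuclideanSpace ℝ (Fin n),
        (∀ k, x (k + 1) = (A + b (J k) * K (J k)).mulVec (x k)) →
        ∀ k, ‖x k‖ ≤ c * μ ^ k * ‖x 0‖ := by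
  obtain ⟨β, hεβ, hβ⟩ := exists_gt_forall_dotProduct_mulVec_le P ε
  have hβ0 : 0 < β := hε.trans hεβ
  set ρ := 1 - ε / β
  have hρ : 0 < ρ := by rw [sub_pos, div_lt_one hβ0]; exact hεβ
  refine ⟨√(β / ε), by positivity, √ρ,
    ⟨Real.sqrt_pos.2 hρ, (Real.sqrt_lt' one_pos).2 (by linarith [div_pos hε hβ0])⟩,
    fun J x hx k => ?_⟩
  set V : ℕ → ℝ := fun k => x k ⬝ᵥ P (J k) *ᵥ x k
  have hstep : ∀ k, V (k + 1) + ε * ‖x k‖ ^ 2 ≤ V k := fun k => by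
    have := dotProduct_mulVec_add_le_of_posSemidef (hLyap (J k) (J (k + 1))) (x k)
    rwa [← hx, EuclideanSpace.dotProduct_self_eq_norm_sq] at this
  have hpos : ∀ k, 0 ≤ V k := fun k => (hP (J k)).posSemidef.dotProduct_mulVec_nonneg (x k)
  refine le_sqrt_div_mul_pow_mul (norm_nonneg _) (norm_nonneg _) (Real.sqrt_nonneg _) hε hβ0.le ?_
  rw [Real.sq_sqrt hρ.le]
  calc ε * ‖x k‖ ^ 2 ≤ V k := by linarith [hstep k, hpos (k + 1)]
    _ ≤ ρ ^ k * V 0 := le_pow_mul_of_lyapunov hε hεβ (fun k => hβ _ _) hstep k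
    _ ≤ ρ ^ k * (β * ‖x 0‖ ^ 2) := by gcongr; exact hβ _ _
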